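/- Soundness and completeness of the SR calculus: assume Eval is strategy-independent, i.e. there is sat : {1,…,N} → Bool with Eval(i, v) = sat(i) for all v ∈ V. Then for any initial strategy v₀, dataset D₀ and oracle O₀, ⟨1, v₀, D₀, O₀⟩ ⟹* Success in the SR calculus if and only if there exists i ∈ {1,…,N} with sat(i) = true. -/

import Mathlib

open scoped Classical

/-- The result of evaluating a formula with a strategy: `sat` or `unsat`. -/
inductive Result where
  | sat
  | unsat
deriving DecidableEq

/-- Configurations of the SR calculus: `Success`, `Failure`, or a tuple
`⟨i, v, D, O⟩` of an index, a strategy, a finite dataset and an oracle. -/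
inductive SRConfig (V : Type) where
  | success
  | failure
  | state (i : ℕ) (v : V) (D : Finset (V × ℕ × ℝ)) (O : V → ℕ → ℝ)

/-- The transition relation `⟹` of the SR calculus, with bound `N`, evaluation
function `Eval`, cost function `cost`, and learning algorithm `fit`. -/
inductive SRStep {V : Type} (N : ℕ) (Eval : ℕ → V → Result) (cost : ℕ → V → ℝ)
    (fit : Finset (V × ℕ × ℝ) → V → ℕ → ℝ) : SRConfig V → SRConfig V → Prop
  | next {i : ℕ} {v : V} {D : Finset (V × ℕ × ℝ)} {O : V → ℕ → ℝ} :
      i < N → Eval i v = Result.unsat →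
      SRStep N Eval cost fit (SRConfig.state i v D O) (SRConfig.state (i + 1) v D O)
  | failure {v : V} {D : Finset (V × ℕ × ℝ)} {O : V → ℕ → ℝ} :
      Eval N v = Result.unsat →
      SRStep N Eval cost fit (SRConfig.state N v D O) SRConfig.failure
  | success {i : ℕ} {v : V} {D : Finset (V × ℕ × ℝ)} {O : V → ℕ → ℝ} :
      Eval i v = Result.sat →
      SRStep N Eval cost fit (SRConfig.state i v D O) SRConfig.success
  | collect {i : ℕ} {v : V} {D : Finset (V × ℕ × ℝ)} {O : V → ℕ → ℝ}
      (vₛ : V) (j : ℕ) : 1 ≤ j → j ≤ i →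
      SRStep N Eval cost fit (SRConfig.state i v D O)
        (SRConfig.state i v (insert (vₛ, j, cost j vₛ) D) O)
  | train {i : ℕ} {v : V} {D : Finset (V × ℕ × ℝ)} {O : V → ℕ → ℝ} :
      SRStep N Eval cost fit (SRConfig.state i v D O) (SRConfig.state i v D (fit D))
  | strategize {i : ℕ} {v : V} {D : Finset (V × ℕ × ℝ)} {O : V → ℕ → ℝ}
      (Vₛ : Finset V) (v' : V) : Vₛ.Nonempty → v' ∈ Vₛ → (∀ w ∈ Vₛ, O v' i ≤ O w i) →
      SRStep N Eval cost fit (SRConfig.state i v D O) (SRConfig.state i v' D O)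

/-!
Only `Next` changes the level, raising it by one while it is below `N`, and `Success` fires
only at a satisfiable level; so the property "some level between the current one and `N` is
satisfiable" propagates backwards from `Success` along `⟹`. Strategy independence turns this
into a satisfiable `isSat` level. Conversely, with the strategy fixed, `Next` runs through the
unsatisfiable levels until the first satisfiable one, where `Success` fires.
-/

def SRConfig.SatAhead {V : Type} (N : ℕ) (Eval : ℕ → V → Result) : SRConfig V → Prop
  | .success => True
  | .failure => False
  | .state i _ _ _ => i ≤ N → ∃ j w, i ≤ j ∧ j ≤ N ∧ Eval j w = .sat

namespace SRStep

variable {V : Type} {N : ℕ} {Eval : ℕ → V → Result} {cost : ℕ → V → ℝ}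
  {fit : Finset (V × ℕ × ℝ) → V → ℕ → ℝ}

theorem satAhead_of_satAhead {c c' : SRConfig V} (h : SRStep N Eval cost fit c c')
    (h' : c'.SatAhead N Eval) : c.SatAhead N Eval := by
  cases h with
  | next hiN _ =>
    intro _
    obtain ⟨j, w, hij, hjN, hsat⟩ := h' hiN
    exact ⟨j, w, by omega, hjN, hsat⟩
  | failure => exact h'.elim
  | success hsat => exact fun hiN => ⟨_, _, le_rfl, hiN, hsat⟩
  | collect | train | strategize => exact h'

theorem satAhead_of_reflTransGen_success {c : SRConfig V}
    (h : Relation.ReflTransGen (SRStep N Eval cost fit) c .success) : c.SatAhead N Eval := by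
  induction h using Relation.ReflTransGen.head_induction_on with
  | refl => trivial
  | head hstep _ ih => exact hstep.satAhead_of_satAhead ih

theorem reflTransGen_success_of_sat {i j : ℕ} {v : V} {D : Finset (V × ℕ × ℝ)}
    {O : V → ℕ → ℝ} (hij : i ≤ j) (hjN : j ≤ N) (hsat : Eval j v = .sat) :
    Relation.ReflTransGen (SRStep N Eval cost fit) (.state i v D O) .success := by
  obtain ⟨k, rfl⟩ := Nat.exists_eq_add_of_le hij
  induction k generalizing i with
  | zero => exact .single (.success hsat)
  | succ k ih =>
    cases hi : Eval i v with
    | sat => exact .single (.success hi)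
    | unsat =>
      refine .head (.next (by omega) hi) (ih (by omega) ?_ ?_) <;> rwa [Nat.add_right_comm]

end SRStep

/-- Soundness and completeness of the SR calculus: if `Eval` is
strategy-independent, i.e. `Eval(i, v) = sat(i)` for some `sat : {1,…,N} → Bool`,
then `⟨1, v₀, D₀, O₀⟩ ⟹* Success` iff there exists `i ∈ {1,…,N}` with
`sat(i) = true`. -/
theorem sr_sound_complete {V : Type} (N : ℕ) (hN : 1 ≤ N) (Eval : ℕ → V → Result)
    (cost : ℕ → V → ℝ) (fit : Finset (V × ℕ × ℝ) → V → ℕ → ℝ)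
    (isSat : ℕ → Bool)
    (hEval : ∀ (i : ℕ) (v : V), Eval i v = if isSat i then Result.sat else Result.unsat)
    (v₀ : V) (D₀ : Finset (V × ℕ × ℝ)) (O₀ : V → ℕ → ℝ) :
    Relation.ReflTransGen (SRStep N Eval cost fit) (SRConfig.state 1 v₀ D₀ O₀)
        SRConfig.success ↔
      ∃ i : ℕ, 1 ≤ i ∧ i ≤ N ∧ isSat i = true := by
  have eval_eq_sat (i : ℕ) (v : V) : Eval i v = .sat ↔ isSat i = true := by
    rw [hEval]; cases isSat i <;> simp
  constructor
  · intro h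
    obtain ⟨j, w, h1j, hjN, hsat⟩ := SRStep.satAhead_of_reflTransGen_success h hN
    exact ⟨j, h1j, hjN, (eval_eq_sat j w).1 hsat⟩
  · rintro ⟨i, h1i, hiN, hsat⟩
    exact SRStep.reflTransGen_success_of_sat h1i hiN ((eval_eq_sat i v₀).2 hsat)
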